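/- arXiv:2503.08118 — 8 statements merged into one kernel-verified Lean document; each statement's English description precedes it below -/
import Mathlib

section
/- For every natural number n ≥ 4 and f = z² − xy² − x^{n−1}, the three maximal-dimensional Gröbner cones of f are as follows: (1) {w ∈ (ℝ_{≥0})³ : w₁ + 2w₂ ≤ 2w₃ and w₁ + 2w₂ ≤ (n−1)w₁} (initial form −xy²) equals the cone generated by (2,0,1), (0,0,1), (2,n−2,n−1); (2) {w ∈ (ℝ_{≥0})³ : (n−1)w₁ ≤ 2w₃ and (n−1)w₁ ≤ w₁ + 2w₂} (initial form −x^{n−1}) equals the cone generated by (0,1,0), (0,0,1), (2,n−2,n−1); (3) {w ∈ (ℝ_{≥0})³ : 2w₃ ≤ w₁ + 2w₂ and 2w₃ ≤ (n−1)w₁} (initial form z²) equals the cone generated by (1,0,0), (0,1,0), (2,0,1), (2,n−2,n−1). -/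
/-- The cone generated by three vectors in `ℝ³`. -/
def coneGen3 (v₁ v₂ v₃ : Fin 3 → ℝ) : Set (Fin 3 → ℝ) :=
  {w | ∃ a b c : ℝ, 0 ≤ a ∧ 0 ≤ b ∧ 0 ≤ c ∧ w = a • v₁ + b • v₂ + c • v₃}

/-- The cone generated by four vectors in `ℝ³`. -/
def coneGen4 (v₁ v₂ v₃ v₄ : Fin 3 → ℝ) : Set (Fin 3 → ℝ) :=
  {w | ∃ a b c d : ℝ, 0 ≤ a ∧ 0 ≤ b ∧ 0 ≤ c ∧ 0 ≤ d ∧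
    w = a • v₁ + b • v₂ + c • v₃ + d • v₄}

set_option maxHeartbeats 1000000 in
/-- The three maximal-dimensional Gröbner cones of the `D_n`-singularity
`f = z² - xy² - x^(n-1)`. -/
theorem Dn_groebner_cones (n : ℕ) (hn : 4 ≤ n) :
    ({w : Fin 3 → ℝ | (0 ≤ w 0 ∧ 0 ≤ w 1 ∧ 0 ≤ w 2) ∧
        w 0 + 2 * w 1 ≤ 2 * w 2 ∧ w 0 + 2 * w 1 ≤ ((n : ℝ) - 1) * w 0} =
      coneGen3 ![2, 0, 1] ![0, 0, 1] ![2, (n : ℝ) - 2, (n : ℝ) - 1]) ∧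
    ({w : Fin 3 → ℝ | (0 ≤ w 0 ∧ 0 ≤ w 1 ∧ 0 ≤ w 2) ∧
        ((n : ℝ) - 1) * w 0 ≤ 2 * w 2 ∧ ((n : ℝ) - 1) * w 0 ≤ w 0 + 2 * w 1} =
      coneGen3 ![0, 1, 0] ![0, 0, 1] ![2, (n : ℝ) - 2, (n : ℝ) - 1]) ∧
    ({w : Fin 3 → ℝ | (0 ≤ w 0 ∧ 0 ≤ w 1 ∧ 0 ≤ w 2) ∧
        2 * w 2 ≤ w 0 + 2 * w 1 ∧ 2 * w 2 ≤ ((n : ℝ) - 1) * w 0} =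
      coneGen4 ![1, 0, 0] ![0, 1, 0] ![2, 0, 1] ![2, (n : ℝ) - 2, (n : ℝ) - 1]) := by
  have hn4 : (4 : ℝ) ≤ (n : ℝ) := by exact_mod_cast hn
  have hm : (0 : ℝ) < (n : ℝ) - 2 := by linarith
  have hm' : ((n : ℝ) - 2) ≠ 0 := ne_of_gt hm
  have hm1 : (0 : ℝ) ≤ (n : ℝ) - 1 := by linarith
  refine ⟨?_, ?_, ?_⟩
  · ext w
    simp only [Set.mem_setOf_eq, coneGen3]
    constructor
    · rintro ⟨⟨hx, hy, hz⟩, h1, h2⟩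
      refine ⟨w 0 / 2 - w 1 / ((n : ℝ) - 2), w 2 - w 0 / 2 - w 1, w 1 / ((n : ℝ) - 2),
        ?_, ?_, ?_, ?_⟩
      · rw [sub_nonneg, div_le_div_iff₀ hm two_pos]; nlinarith
      · linarith
      · positivity
      · funext i
        fin_cases i <;> simp [Matrix.cons_val_zero, Matrix.cons_val_one, Matrix.head_cons] <;>
          field_simp <;> ring
    · rintro ⟨a, b, c, ha, hb, hc, hw⟩
      have h0 := congrFun hw 0
      have h1 := congrFun hw 1
      have h2 := congrFun hw 2
      simp [Matrix.cons_val_zero, Matrix.cons_val_one, Matrix.head_cons] at h0 h1 h2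
      refine ⟨⟨?_, ?_, ?_⟩, ?_, ?_⟩ <;>
        nlinarith [mul_nonneg ha hm.le, mul_nonneg hb hm.le, mul_nonneg hc hm.le,
          mul_nonneg ha hm1, mul_nonneg hb hm1, mul_nonneg hc hm1]
  · ext w
    simp only [Set.mem_setOf_eq, coneGen3]
    constructor
    · rintro ⟨⟨hx, hy, hz⟩, h1, h2⟩
      refine ⟨w 1 - w 0 * ((n : ℝ) - 2) / 2, w 2 - w 0 * ((n : ℝ) - 1) / 2, w 0 / 2,
        ?_, ?_, ?_, ?_⟩
      · nlinarith
      · nlinarith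
      · linarith
      · funext i
        fin_cases i <;> simp [Matrix.cons_val_zero, Matrix.cons_val_one, Matrix.head_cons] <;>
          ring
    · rintro ⟨a, b, c, ha, hb, hc, hw⟩
      have h0 := congrFun hw 0
      have h1 := congrFun hw 1
      have h2 := congrFun hw 2
      simp [Matrix.cons_val_zero, Matrix.cons_val_one, Matrix.head_cons] at h0 h1 h2
      refine ⟨⟨?_, ?_, ?_⟩, ?_, ?_⟩ <;>
        nlinarith [mul_nonneg ha hm.le, mul_nonneg hb hm.le, mul_nonneg hc hm.le,
          mul_nonneg ha hm1, mul_nonneg hb hm1, mul_nonneg hc hm1]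
  · ext w
    simp only [Set.mem_setOf_eq, coneGen4]
    constructor
    · rintro ⟨⟨hx, hy, hz⟩, h1, h2⟩
      rcases le_or_gt (2 * w 2) (w 0) with hcase | hcase
      · refine ⟨w 0 - 2 * w 2, w 1, w 2, 0, by linarith, hy, hz, le_refl 0, ?_⟩
        funext i
        fin_cases i <;> simp [Matrix.cons_val_zero, Matrix.cons_val_one, Matrix.head_cons] <;>
          ring
      · refine ⟨0, w 1 + w 0 / 2 - w 2, (((n : ℝ) - 1) * w 0 - 2 * w 2) / (2 * ((n : ℝ) - 2)),
          (2 * w 2 - w 0) / (2 * ((n : ℝ) - 2)), le_refl 0, by linarith, ?_, ?_, ?_⟩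
        · apply div_nonneg (by linarith) (by linarith)
        · apply div_nonneg (by linarith) (by linarith)
        · funext i
          fin_cases i <;> simp [Matrix.cons_val_zero, Matrix.cons_val_one, Matrix.head_cons] <;>
            field_simp <;> ring
    · rintro ⟨a, b, c, d, ha, hb, hc, hd, hw⟩
      have h0 := congrFun hw 0
      have h1 := congrFun hw 1
      have h2 := congrFun hw 2
      simp [Matrix.cons_val_zero, Matrix.cons_val_one, Matrix.head_cons] at h0 h1 h2
      refine ⟨⟨?_, ?_, ?_⟩, ?_, ?_⟩ <;>
        nlinarith [mul_nonneg ha hm.le, mul_nonneg hb hm.le, mul_nonneg hc hm.le,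
          mul_nonneg hd hm.le, mul_nonneg ha hm1, mul_nonneg hb hm1, mul_nonneg hc hm1,
          mul_nonneg hd hm1]
end

section
/- For every natural number n ≥ 1, the set of nonzero integer vectors lying in the profile of the Gröbner cone C = cone((1,0,0), (0,1,0), (n+1,0,1), (0,n+1,1)) of the A_n-singularity, i.e. the set of nonzero (a,b,c) ∈ ℤ³ that lie in C and satisfy a + b − n·c ≤ 1, is exactly {(1,0,0), (0,1,0)} ∪ {(a,b,1) : a, b ∈ ℤ_{≥0}, a + b = n+1}. -/
/-- The nonzero integer points of the profile of the Gröbner cone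
`cone((1,0,0), (0,1,0), (n+1,0,1), (0,n+1,1))` of the `A_n`-singularity (the points
of the cone with `x + y - n·z ≤ 1`) are exactly `(1,0,0)`, `(0,1,0)` and the
`(a,b,1)` with `a, b ≥ 0`, `a + b = n+1`. -/
theorem An_profile_points_z (n : ℕ) (hn : 1 ≤ n) :
    {v : Fin 3 → ℤ | v ≠ 0 ∧
        (fun i => (v i : ℝ)) ∈
          coneGen4 ![1, 0, 0] ![0, 1, 0] ![(n : ℝ) + 1, 0, 1] ![0, (n : ℝ) + 1, 1] ∧
        v 0 + v 1 - (n : ℤ) * v 2 ≤ 1} =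
      {v | v = ![1, 0, 0] ∨ v = ![0, 1, 0] ∨
        ∃ a b : ℤ, 0 ≤ a ∧ 0 ≤ b ∧ a + b = (n : ℤ) + 1 ∧ v = ![a, b, 1]} := by
  ext v
  simp only [Set.mem_setOf_eq, coneGen4]
  constructor
  · rintro ⟨hv, ⟨a, b, c, d, ha, hb, hc, hd, hw⟩, hle⟩
    have h0 := congrFun hw 0
    have h1 := congrFun hw 1
    have h2 := congrFun hw 2
    simp [Matrix.cons_val_zero, Matrix.cons_val_one, Matrix.head_cons,
      Matrix.cons_val_two, Matrix.tail_cons] at h0 h1 h2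
    -- real inequalities
    have hnpos : (0:ℝ) < (n:ℝ) + 1 := by positivity
    have hv0 : (0:ℝ) ≤ (v 0 : ℝ) := by nlinarith
    have hv1 : (0:ℝ) ≤ (v 1 : ℝ) := by nlinarith
    have hv2 : (0:ℝ) ≤ (v 2 : ℝ) := by nlinarith
    have hkey : ((n:ℝ) + 1) * (v 2 : ℝ) ≤ (v 0 : ℝ) + (v 1 : ℝ) := by nlinarith
    have iv0 : (0:ℤ) ≤ v 0 := by exact_mod_cast hv0
    have iv1 : (0:ℤ) ≤ v 1 := by exact_mod_cast hv1
    have iv2 : (0:ℤ) ≤ v 2 := by exact_mod_cast hv2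
    have ikey : ((n:ℤ) + 1) * v 2 ≤ v 0 + v 1 := by exact_mod_cast hkey
    have hz : v 2 ≤ 1 := by nlinarith
    interval_cases h : (v 2)
    · -- v 2 = 0
      have hsum : v 0 + v 1 ≤ 1 := by omega
      rcases Nat.lt_or_ge 0 0 with _ | _
      · omega
      · by_cases h0' : v 0 = 0
        · right; left
          have h1' : v 1 = 1 := by
            by_contra hne
            have : v 1 = 0 := by omega
            apply hv
            funext i; fin_cases i <;> simp [h0', this, h]
          funext i; fin_cases i <;> simp [h0', h1', h]
        · left
          have h0'' : v 0 = 1 := by omega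
          have h1' : v 1 = 0 := by omega
          funext i; fin_cases i <;> simp [h0'', h1', h]
    · -- v 2 = 1
      right; right
      refine ⟨v 0, v 1, iv0, iv1, by omega, ?_⟩
      funext i; fin_cases i <;> simp [h]
  · rintro (rfl | rfl | ⟨a, b, ha, hb, hab, rfl⟩)
    · refine ⟨?_, ⟨1, 0, 0, 0, zero_le_one, le_refl _, le_refl _, le_refl _, ?_⟩, ?_⟩
      · intro h; have := congrFun h 0; simp at this
      · funext i; fin_cases i <;> simp
      · simp
    · refine ⟨?_, ⟨0, 1, 0, 0, le_refl _, zero_le_one, le_refl _, le_refl _, ?_⟩, ?_⟩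
      · intro h; have := congrFun h 1; simp at this
      · funext i; fin_cases i <;> simp
      · simp
    · have hnpos : (0:ℝ) < (n:ℝ) + 1 := by positivity
      refine ⟨?_, ⟨0, 0, (a:ℝ)/((n:ℝ)+1), (b:ℝ)/((n:ℝ)+1), le_refl _, le_refl _,
          by positivity, by positivity, ?_⟩, ?_⟩
      · intro h; have := congrFun h 2; simp at this
      · have habR : (a:ℝ) + (b:ℝ) = (n:ℝ) + 1 := by exact_mod_cast hab
        funext i; fin_cases i <;>
          simp <;> field_simp <;> linarith
      · simp; omega
end

section
/- For every even natural number n ≥ 4, the set of nonzero integer vectors lying in the profile of the Gröbner cone C = cone((2,0,1), (0,0,1), (2,n−2,n−1)) of the D_n-singularity, i.e. the set of nonzero (a,b,c) ∈ ℤ³ that lie in C and satisfy c − b ≤ 1, is exactly {(0,0,1)} ∪ {(1,k,k+1) : k ∈ ℤ, 0 ≤ k ≤ (n−2)/2} ∪ {(2,k,k+1) : k ∈ ℤ, 0 ≤ k ≤ n−2}. -/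
/-!
Adding `a + 2b ≤ 2c` (a facet inequality of the cone) to `c - b ≤ 1` (the profile) gives `a ≤ 2`,
so a lattice point of the profile lies on one of the planes `a = 0, 1, 2`. On each plane the
inequalities pin `c` down to `b + 1` (or force `(0,0,1)` when `a = 0`), and the remaining facet
`2b ≤ (n-2)a` bounds `b`.
-/

lemma mem_coneGen3_iff {t : ℝ} (ht : 2 < t) (w : Fin 3 → ℝ) :
    w ∈ coneGen3 ![2, 0, 1] ![0, 0, 1] ![2, t - 2, t - 1] ↔
      0 ≤ w 0 ∧ 0 ≤ w 1 ∧ w 0 + 2 * w 1 ≤ 2 * w 2 ∧ 2 * w 1 ≤ (t - 2) * w 0 := by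
  have ht₂ : 0 < t - 2 := by linarith
  constructor
  · rintro ⟨a, b, c, ha, hb, hc, rfl⟩
    simp only [Pi.add_apply, Pi.smul_apply, Matrix.cons_val_zero, Matrix.cons_val_one,
      Matrix.cons_val_two, Matrix.head_cons, Matrix.tail_cons, smul_eq_mul]
    refine ⟨by positivity, by positivity, by linarith, by nlinarith⟩
  · rintro ⟨h₀, h₁, h₂, h₃⟩
    -- the coordinates of `w` in the basis formed by the three generators
    refine ⟨((t - 2) * w 0 - 2 * w 1) / (2 * (t - 2)), w 2 - w 0 / 2 - w 1, w 1 / (t - 2),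
      div_nonneg (by linarith) (by positivity), by linarith, by positivity, ?_⟩
    ext i
    fin_cases i <;>
      simp only [Fin.zero_eta, Fin.mk_one, Fin.reduceFinMk, Pi.add_apply, Pi.smul_apply,
        Matrix.cons_val_zero, Matrix.cons_val_one, Matrix.cons_val_two, Matrix.head_cons,
        Matrix.tail_cons, smul_eq_mul] <;>
      field_simp <;> ring

lemma intCast_mem_coneGen3_iff {n : ℕ} (hn : 2 < n) (v : Fin 3 → ℤ) :
    (fun i => (v i : ℝ)) ∈ coneGen3 ![2, 0, 1] ![0, 0, 1] ![2, (n : ℝ) - 2, (n : ℝ) - 1] ↔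
      0 ≤ v 0 ∧ 0 ≤ v 1 ∧ v 0 + 2 * v 1 ≤ 2 * v 2 ∧ 2 * v 1 ≤ ((n : ℤ) - 2) * v 0 := by
  rw [mem_coneGen3_iff (by exact_mod_cast hn)]
  norm_cast

lemma profile_lattice_points_iff (m a b c : ℤ) :
    (¬(a = 0 ∧ b = 0 ∧ c = 0) ∧ (0 ≤ a ∧ 0 ≤ b ∧ a + 2 * b ≤ 2 * c ∧ 2 * b ≤ m * a) ∧
        c - b ≤ 1) ↔
      (a = 0 ∧ b = 0 ∧ c = 1) ∨ (∃ k, 0 ≤ k ∧ 2 * k ≤ m ∧ a = 1 ∧ b = k ∧ c = k + 1) ∨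
        (∃ k, 0 ≤ k ∧ k ≤ m ∧ a = 2 ∧ b = k ∧ c = k + 1) := by
  constructor
  · rintro ⟨hne, ⟨ha, hb, hfacet, hm⟩, hprofile⟩
    have ha₂ : a ≤ 2 := by linarith
    interval_cases a
    · left; omega
    · right; left; exact ⟨b, hb, by linarith, rfl, rfl, by omega⟩
    · right; right; exact ⟨b, hb, by linarith, rfl, rfl, by omega⟩
  · rintro (⟨rfl, rfl, rfl⟩ | ⟨k, hk, hkm, rfl, rfl, rfl⟩ | ⟨k, hk, hkm, rfl, rfl, rfl⟩) <;>
      refine ⟨by omega, ⟨by omega, by omega, by omega, by linarith⟩, by omega⟩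

theorem Dn_profile_points_even_general (n : ℕ) (hn : 4 ≤ n) :
    {v : Fin 3 → ℤ | v ≠ 0 ∧
        (fun i => (v i : ℝ)) ∈
          coneGen3 ![2, 0, 1] ![0, 0, 1] ![2, (n : ℝ) - 2, (n : ℝ) - 1] ∧
        v 2 - v 1 ≤ 1} =
      {v | v = ![0, 0, 1] ∨
        (∃ k : ℤ, 0 ≤ k ∧ 2 * k ≤ (n : ℤ) - 2 ∧ v = ![1, k, k + 1]) ∨
        (∃ k : ℤ, 0 ≤ k ∧ k ≤ (n : ℤ) - 2 ∧ v = ![2, k, k + 1])} := by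
  ext v
  rw [Set.mem_ofPred_eq, Set.mem_ofPred_eq, intCast_mem_coneGen3_iff (by omega)]
  obtain ⟨a, b, c, rfl⟩ : ∃ a b c, v = ![a, b, c] :=
    ⟨v 0, v 1, v 2, by ext i; fin_cases i <;> rfl⟩
  simpa using profile_lattice_points_iff ((n : ℤ) - 2) a b c

/-- For even `n ≥ 4`, the nonzero integer points of the profile of the Gröbner
cone `cone((2,0,1), (0,0,1), (2,n-2,n-1))` of the `D_n`-singularity (the points of
the cone with `z - y ≤ 1`) are exactly `(0,0,1)`, the `(1,k,k+1)` with
`0 ≤ k ≤ (n-2)/2`, and the `(2,k,k+1)` with `0 ≤ k ≤ n-2`. -/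
theorem Dn_profile_points_even (n : ℕ) (hn : 4 ≤ n) (heven : Even n) :
    {v : Fin 3 → ℤ | v ≠ 0 ∧
        (fun i => (v i : ℝ)) ∈
          coneGen3 ![2, 0, 1] ![0, 0, 1] ![2, (n : ℝ) - 2, (n : ℝ) - 1] ∧
        v 2 - v 1 ≤ 1} =
      {v | v = ![0, 0, 1] ∨
        (∃ k : ℤ, 0 ≤ k ∧ 2 * k ≤ (n : ℤ) - 2 ∧ v = ![1, k, k + 1]) ∨
        (∃ k : ℤ, 0 ≤ k ∧ k ≤ (n : ℤ) - 2 ∧ v = ![2, k, k + 1])} :=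
  Dn_profile_points_even_general n hn
end

section
/- The set of nonzero integer vectors lying in the profile of the Gröbner cone C = cone((1,0,0), (0,0,1), (3,4,6)) of the E₆-singularity, i.e. the set of nonzero (a,b,c) ∈ ℤ³ that lie in C and satisfy a − 2b + c ≤ 1, is exactly {(1,0,0), (0,0,1), (3,4,6), (1,1,2), (2,2,3)}. -/
/-- The nonzero integer points of the profile of the Gröbner cone
`cone((1,0,0), (0,0,1), (3,4,6))` of the `E₆`-singularity (the points of the cone
with `x - 2y + z ≤ 1`). -/
theorem E6_profile_points_y3 :
    {v : Fin 3 → ℤ | v ≠ 0 ∧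
        (fun i => (v i : ℝ)) ∈ coneGen3 ![1, 0, 0] ![0, 0, 1] ![3, 4, 6] ∧
        v 0 - 2 * v 1 + v 2 ≤ 1} =
      {![1, 0, 0], ![0, 0, 1], ![3, 4, 6], ![1, 1, 2], ![2, 2, 3]} := by
  ext v
  simp only [Set.mem_setOf_eq, Set.mem_insert_iff, Set.mem_singleton_iff, coneGen3]
  constructor
  · rintro ⟨hne, ⟨a, b, c, ha, hb, hc, heq⟩, hle⟩
    have h0 := congrFun heq 0
    have h1 := congrFun heq 1
    have h2 := congrFun heq 2
    simp [Matrix.cons_val_zero, Matrix.cons_val_one] at h0 h1 h2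
    have i1 : (0:ℝ) ≤ (v 1 : ℝ) := by rw [h1]; positivity
    have i2 : 3 * (v 1 : ℝ) ≤ 4 * (v 0 : ℝ) := by rw [h0, h1]; nlinarith
    have i3 : 3 * (v 1 : ℝ) ≤ 2 * (v 2 : ℝ) := by rw [h1, h2]; nlinarith
    have j1 : (0:ℤ) ≤ v 1 := by exact_mod_cast i1
    have j2 : 3 * v 1 ≤ 4 * v 0 := by exact_mod_cast i2
    have j3 : 3 * v 1 ≤ 2 * v 2 := by exact_mod_cast i3
    have hne' : ¬(v 0 = 0 ∧ v 1 = 0 ∧ v 2 = 0) := by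
      rintro ⟨e0, e1, e2⟩
      exact hne (funext fun i => by fin_cases i <;> assumption)
    have key : (v 0 = 1 ∧ v 1 = 0 ∧ v 2 = 0) ∨ (v 0 = 0 ∧ v 1 = 0 ∧ v 2 = 1) ∨
        (v 0 = 3 ∧ v 1 = 4 ∧ v 2 = 6) ∨ (v 0 = 1 ∧ v 1 = 1 ∧ v 2 = 2) ∨
        (v 0 = 2 ∧ v 1 = 2 ∧ v 2 = 3) := by
      have hb : v 1 = 0 ∨ v 1 = 1 ∨ v 1 = 2 ∨ v 1 = 3 ∨ v 1 = 4 := by omega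
      rcases hb with hb | hb | hb | hb | hb <;> omega
    rcases key with ⟨e0, e1, e2⟩ | ⟨e0, e1, e2⟩ | ⟨e0, e1, e2⟩ | ⟨e0, e1, e2⟩ | ⟨e0, e1, e2⟩
    · exact Or.inl (funext fun i => by fin_cases i <;> simpa)
    · exact Or.inr (Or.inl (funext fun i => by fin_cases i <;> simpa))
    · exact Or.inr (Or.inr (Or.inl (funext fun i => by fin_cases i <;> simpa)))
    · exact Or.inr (Or.inr (Or.inr (Or.inl (funext fun i => by fin_cases i <;> simpa))))
    · exact Or.inr (Or.inr (Or.inr (Or.inr (funext fun i => by fin_cases i <;> simpa))))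
  · rintro (rfl | rfl | rfl | rfl | rfl)
    · refine ⟨by decide, ⟨1, 0, 0, by norm_num, by norm_num, by norm_num, ?_⟩, by decide⟩
      funext i; fin_cases i <;> simp
    · refine ⟨by decide, ⟨0, 1, 0, by norm_num, by norm_num, by norm_num, ?_⟩, by decide⟩
      funext i; fin_cases i <;> simp
    · refine ⟨by decide, ⟨0, 0, 1, by norm_num, by norm_num, by norm_num, ?_⟩, by decide⟩
      funext i; fin_cases i <;> simp
    · refine ⟨by decide, ⟨1/4, 1/2, 1/4, by norm_num, by norm_num, by norm_num, ?_⟩, by decide⟩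
      funext i; fin_cases i <;> simp <;> norm_num
    · refine ⟨by decide, ⟨1/2, 0, 1/2, by norm_num, by norm_num, by norm_num, ?_⟩, by decide⟩
      funext i; fin_cases i <;> simp <;> norm_num
end

section
/- The set of nonzero integer vectors lying in the profile of the Gröbner cone C = cone((1,0,0), (0,1,0), (3,4,6)) of the E₆-singularity, i.e. the set of nonzero (a,b,c) ∈ ℤ³ that lie in C and satisfy a + b − c ≤ 1, is exactly {(1,0,0), (0,1,0), (3,4,6), (1,1,1), (1,2,2), (2,2,3), (2,3,4)}. -/
theorem mem_coneGen3_e₀_e₁_iff (v w : Fin 3 → ℝ) (hv : 0 < v 2) :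
    w ∈ coneGen3 ![1, 0, 0] ![0, 1, 0] v ↔
      0 ≤ w 2 ∧ v 1 * w 2 ≤ v 2 * w 1 ∧ v 0 * w 2 ≤ v 2 * w 0 := by
  constructor
  · rintro ⟨a, b, c, ha, hb, hc, rfl⟩
    simp only [Pi.add_apply, Pi.smul_apply, smul_eq_mul, Matrix.cons_val_zero,
      Matrix.cons_val_one, Matrix.cons_val_two, Matrix.tail_cons, Matrix.head_cons]
    exact ⟨by positivity, by nlinarith, by nlinarith⟩
  · rintro ⟨h2, h1, h0⟩
    refine ⟨w 0 - v 0 * w 2 / v 2, w 1 - v 1 * w 2 / v 2, w 2 / v 2, ?_, ?_, by positivity, ?_⟩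
    · rw [sub_nonneg, div_le_iff₀ hv]
      linarith
    · rw [sub_nonneg, div_le_iff₀ hv]
      linarith
    · ext i
      fin_cases i <;> simp <;> field_simp <;> ring

theorem intCast_mem_coneGen3_E6_iff (v : Fin 3 → ℤ) :
    (fun i => (v i : ℝ)) ∈ coneGen3 ![1, 0, 0] ![0, 1, 0] ![3, 4, 6] ↔
      0 ≤ v 2 ∧ 2 * v 2 ≤ 3 * v 1 ∧ v 2 ≤ 2 * v 0 := by
  rw [mem_coneGen3_e₀_e₁_iff _ _ (by simp)]
  simp only [Matrix.cons_val_zero, Matrix.cons_val_one, Matrix.cons_val_two, Matrix.tail_cons,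
    Matrix.head_cons]
  norm_cast
  omega

/-- The nonzero integer points of the profile of the Gröbner cone
`cone((1,0,0), (0,1,0), (3,4,6))` of the `E₆`-singularity (the points of the cone
with `x + y - z ≤ 1`). -/
theorem E6_profile_points_z2 :
    {v : Fin 3 → ℤ | v ≠ 0 ∧
        (fun i => (v i : ℝ)) ∈ coneGen3 ![1, 0, 0] ![0, 1, 0] ![3, 4, 6] ∧
        v 0 + v 1 - v 2 ≤ 1} =
      {![1, 0, 0], ![0, 1, 0], ![3, 4, 6], ![1, 1, 1], ![1, 2, 2], ![2, 2, 3],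
        ![2, 3, 4]} := by
  ext v
  obtain ⟨x, y, z, rfl⟩ : ∃ x y z, v = ![x, y, z] :=
    ⟨v 0, v 1, v 2, by ext i; fin_cases i <;> rfl⟩
  simp only [Set.mem_ofPred_eq, Set.mem_insert_iff, Set.mem_singleton_iff, ne_eq,
    intCast_mem_coneGen3_E6_iff, Matrix.cons_eq_zero_iff, Matrix.vecCons_inj, Matrix.zero_empty,
    Matrix.cons_val_zero, Matrix.cons_val_one, Matrix.cons_val_two, Matrix.tail_cons,
    Matrix.head_cons, and_true]
  omega
end

section
/- The set of nonzero integer vectors lying in the profile of the Gröbner cone C = cone((1,0,0), (0,0,1), (9,6,4)) of the E₇-singularity, i.e. the set of nonzero (a,b,c) ∈ ℤ³ that lie in C and satisfy a − 2b + c ≤ 1, is exactly {(1,0,0), (0,0,1), (9,6,4), (2,1,1), (3,2,2), (5,3,2), (6,4,3)}. -/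
/-!
The cone is cut out by its three facet inequalities `0 ≤ y`, `3y ≤ 2x`, `2y ≤ 3z`. On it
`x - 2y + z ≥ 3y/2 - 2y + 2y/3 = y/6`, so the profile forces `y ≤ 6`, and for each of these
seven values of `y` the facet inequalities and `x - 2y + z ≤ 1` leave only finitely many `x, z`.
-/

theorem mem_coneGen3_E7_iff (w : Fin 3 → ℝ) :
    w ∈ coneGen3 ![1, 0, 0] ![0, 0, 1] ![9, 6, 4] ↔
      0 ≤ w 1 ∧ 3 * w 1 ≤ 2 * w 0 ∧ 2 * w 1 ≤ 3 * w 2 := by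
  constructor
  · rintro ⟨a, b, c, ha, hb, hc, rfl⟩
    simp only [Pi.add_apply, Pi.smul_apply, Matrix.cons_val_zero, Matrix.cons_val_one,
      Matrix.cons_val_two, Matrix.head_cons, Matrix.tail_cons, smul_eq_mul]
    refine ⟨by linarith, by linarith, by linarith⟩
  · rintro ⟨h₁, h₀, h₂⟩
    refine ⟨w 0 - 3 / 2 * w 1, w 2 - 2 / 3 * w 1, w 1 / 6,
      by linarith, by linarith, by linarith, ?_⟩
    ext i
    fin_cases i <;> simp <;> ring

theorem intCast_mem_coneGen3_E7_iff (a b c : ℤ) :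
    (fun i => ((![a, b, c] : Fin 3 → ℤ) i : ℝ)) ∈ coneGen3 ![1, 0, 0] ![0, 0, 1] ![9, 6, 4] ↔
      0 ≤ b ∧ 3 * b ≤ 2 * a ∧ 2 * b ≤ 3 * c := by
  rw [mem_coneGen3_E7_iff]
  simp only [Matrix.cons_val_zero, Matrix.cons_val_one, Matrix.cons_val_two, Matrix.head_cons,
    Matrix.tail_cons]
  norm_cast

theorem E7_profile_int_points {a b c : ℤ} (hb : 0 ≤ b) (hba : 3 * b ≤ 2 * a)
    (hbc : 2 * b ≤ 3 * c) (hprofile : a - 2 * b + c ≤ 1) (hne : ¬(a = 0 ∧ b = 0 ∧ c = 0)) :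
    (a = 1 ∧ b = 0 ∧ c = 0) ∨ (a = 0 ∧ b = 0 ∧ c = 1) ∨ (a = 9 ∧ b = 6 ∧ c = 4) ∨
      (a = 2 ∧ b = 1 ∧ c = 1) ∨ (a = 3 ∧ b = 2 ∧ c = 2) ∨ (a = 5 ∧ b = 3 ∧ c = 2) ∨
      (a = 6 ∧ b = 4 ∧ c = 3) := by
  have hb6 : b ≤ 6 := by omega
  interval_cases b <;> omega

/-- The nonzero integer points of the profile of the Gröbner cone
`cone((1,0,0), (0,0,1), (9,6,4))` of the `E₇`-singularity (the points of the cone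
with `x - 2y + z ≤ 1`). -/
theorem E7_profile_points_y3 :
    {v : Fin 3 → ℤ | v ≠ 0 ∧
        (fun i => (v i : ℝ)) ∈ coneGen3 ![1, 0, 0] ![0, 0, 1] ![9, 6, 4] ∧
        v 0 - 2 * v 1 + v 2 ≤ 1} =
      {![1, 0, 0], ![0, 0, 1], ![9, 6, 4], ![2, 1, 1], ![3, 2, 2], ![5, 3, 2],
        ![6, 4, 3]} := by
  ext v
  obtain ⟨a, b, c, rfl⟩ : ∃ a b c : ℤ, v = ![a, b, c] :=
    ⟨v 0, v 1, v 2, by ext i; fin_cases i <;> rfl⟩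
  have hne : ![a, b, c] ≠ 0 ↔ ¬(a = 0 ∧ b = 0 ∧ c = 0) := by
    simp [← Matrix.cons_zero_zero]
  simp only [Set.mem_ofPred_eq, Set.mem_insert_iff, Set.mem_singleton_iff,
    intCast_mem_coneGen3_E7_iff, hne, Matrix.vecCons_inj, Matrix.cons_val_zero,
    Matrix.cons_val_one, Matrix.cons_val_two, Matrix.head_cons, Matrix.tail_cons]
  constructor
  · rintro ⟨hne, ⟨hb, hba, hbc⟩, hprofile⟩
    simpa using E7_profile_int_points hb hba hbc hprofile hne
  · rintro (h | h | h | h | h | h | h) <;> simp at h <;> omega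
end

section
/- The set of nonzero integer vectors lying in the profile of the Gröbner cone C = cone((1,0,0), (0,0,1), (6,10,15)) of the E₈-singularity, i.e. the set of nonzero (a,b,c) ∈ ℤ³ that lie in C and satisfy a − 2b + c ≤ 1, is exactly {(1,0,0), (0,0,1), (6,10,15), (1,1,2), (2,2,3), (2,3,5), (3,4,6), (3,5,8), (4,6,9), (5,8,12)}. -/
lemma cone_iff (v : Fin 3 → ℤ) :
    (fun i => (v i : ℝ)) ∈ coneGen3 ![1, 0, 0] ![0, 0, 1] ![6, 10, 15] ↔
      0 ≤ v 1 ∧ 3 * v 1 ≤ 5 * v 0 ∧ 3 * v 1 ≤ 2 * v 2 := by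
  constructor
  · rintro ⟨a, b, c, ha, hb, hc, h⟩
    have h0 := congrFun h 0
    have h1 := congrFun h 1
    have h2 := congrFun h 2
    simp [Matrix.cons_val_zero, Matrix.cons_val_one, Matrix.head_cons] at h0 h1 h2
    refine ⟨?_, ?_, ?_⟩
    · have : (0 : ℝ) ≤ (v 1 : ℝ) := by rw [h1]; linarith
      exact_mod_cast this
    · have : 3 * (v 1 : ℝ) ≤ 5 * (v 0 : ℝ) := by rw [h0, h1]; linarith
      exact_mod_cast this
    · have : 3 * (v 1 : ℝ) ≤ 2 * (v 2 : ℝ) := by rw [h1, h2]; linarith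
      exact_mod_cast this
  · rintro ⟨h1, h2, h3⟩
    have h1' : (0 : ℝ) ≤ (v 1 : ℝ) := by exact_mod_cast h1
    have h2' : 3 * (v 1 : ℝ) ≤ 5 * (v 0 : ℝ) := by exact_mod_cast h2
    have h3' : 3 * (v 1 : ℝ) ≤ 2 * (v 2 : ℝ) := by exact_mod_cast h3
    refine ⟨(v 0 : ℝ) - 3/5 * (v 1 : ℝ), (v 2 : ℝ) - 3/2 * (v 1 : ℝ), (v 1 : ℝ) / 10,
      by linarith, by linarith, by linarith, ?_⟩
    funext i
    fin_cases i <;>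
      simp [Matrix.cons_val_zero, Matrix.cons_val_one, Matrix.head_cons] <;> ring

lemma vec_eq (v : Fin 3 → ℤ) (p q r : ℤ) :
    v = ![p, q, r] ↔ v 0 = p ∧ v 1 = q ∧ v 2 = r := by
  constructor
  · rintro rfl; simp
  · rintro ⟨h0, h1, h2⟩
    funext i
    fin_cases i <;> simpa

lemma E8_forward (a b c : ℤ) (hne : ¬(a = 0 ∧ b = 0 ∧ c = 0)) (h1 : 0 ≤ b)
    (h2 : 3 * b ≤ 5 * a) (h3 : 3 * b ≤ 2 * c) (h4 : a - 2 * b + c ≤ 1) :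
    a = 1 ∧ b = 0 ∧ c = 0 ∨
      a = 0 ∧ b = 0 ∧ c = 1 ∨
      a = 6 ∧ b = 10 ∧ c = 15 ∨
      a = 1 ∧ b = 1 ∧ c = 2 ∨
      a = 2 ∧ b = 2 ∧ c = 3 ∨
      a = 2 ∧ b = 3 ∧ c = 5 ∨
      a = 3 ∧ b = 4 ∧ c = 6 ∨
      a = 3 ∧ b = 5 ∧ c = 8 ∨
      a = 4 ∧ b = 6 ∧ c = 9 ∨
      a = 5 ∧ b = 8 ∧ c = 12 := by
  have hub : b = 0 ∨ b = 1 ∨ b = 2 ∨ b = 3 ∨ b = 4 ∨ b = 5 ∨ b = 6 ∨ b = 7 ∨ b = 8 ∨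
      b = 9 ∨ b = 10 := by omega
  rcases hub with rfl | rfl | rfl | rfl | rfl | rfl | rfl | rfl | rfl | rfl | rfl
  · rcases (show a = 1 ∧ c = 0 ∨ a = 0 ∧ c = 1 by omega) with ⟨rfl, rfl⟩ | ⟨rfl, rfl⟩
    · exact Or.inl ⟨rfl, rfl, rfl⟩
    · exact Or.inr (Or.inl ⟨rfl, rfl, rfl⟩)
  · obtain ⟨rfl, rfl⟩ : a = 1 ∧ c = 2 := by omega
    exact Or.inr (Or.inr (Or.inr (Or.inl ⟨rfl, rfl, rfl⟩)))
  · obtain ⟨rfl, rfl⟩ : a = 2 ∧ c = 3 := by omega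
    exact Or.inr (Or.inr (Or.inr (Or.inr (Or.inl ⟨rfl, rfl, rfl⟩))))
  · obtain ⟨rfl, rfl⟩ : a = 2 ∧ c = 5 := by omega
    exact Or.inr (Or.inr (Or.inr (Or.inr (Or.inr (Or.inl ⟨rfl, rfl, rfl⟩)))))
  · obtain ⟨rfl, rfl⟩ : a = 3 ∧ c = 6 := by omega
    exact Or.inr (Or.inr (Or.inr (Or.inr (Or.inr (Or.inr (Or.inl ⟨rfl, rfl, rfl⟩))))))
  · obtain ⟨rfl, rfl⟩ : a = 3 ∧ c = 8 := by omega
    exact Or.inr (Or.inr (Or.inr (Or.inr (Or.inr (Or.inr (Or.inr (Or.inl ⟨rfl, rfl, rfl⟩)))))))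
  · obtain ⟨rfl, rfl⟩ : a = 4 ∧ c = 9 := by omega
    exact Or.inr (Or.inr (Or.inr (Or.inr (Or.inr (Or.inr (Or.inr (Or.inr (Or.inl ⟨rfl, rfl, rfl⟩))))))))
  · exact absurd h4 (by omega)
  · obtain ⟨rfl, rfl⟩ : a = 5 ∧ c = 12 := by omega
    exact Or.inr (Or.inr (Or.inr (Or.inr (Or.inr (Or.inr (Or.inr (Or.inr (Or.inr (⟨rfl, rfl, rfl⟩)))))))))
  · exact absurd h4 (by omega)
  · obtain ⟨rfl, rfl⟩ : a = 6 ∧ c = 15 := by omega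
    exact Or.inr (Or.inr (Or.inl ⟨rfl, rfl, rfl⟩))

/-- The nonzero integer points of the profile of the Gröbner cone
`cone((1,0,0), (0,0,1), (6,10,15))` of the `E₈`-singularity (the points of the
cone with `x - 2y + z ≤ 1`). -/
theorem E8_profile_points_y3 :
    {v : Fin 3 → ℤ | v ≠ 0 ∧
        (fun i => (v i : ℝ)) ∈ coneGen3 ![1, 0, 0] ![0, 0, 1] ![6, 10, 15] ∧
        v 0 - 2 * v 1 + v 2 ≤ 1} =
      {![1, 0, 0], ![0, 0, 1], ![6, 10, 15], ![1, 1, 2], ![2, 2, 3], ![2, 3, 5],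
        ![3, 4, 6], ![3, 5, 8], ![4, 6, 9], ![5, 8, 12]} := by
  ext v
  have hz0 : v = 0 ↔ v 0 = 0 ∧ v 1 = 0 ∧ v 2 = 0 := by
    constructor
    · rintro rfl; simp
    · rintro ⟨h0, h1, h2⟩; funext i; fin_cases i <;> assumption
  have hz : v ≠ 0 ↔ ¬(v 0 = 0 ∧ v 1 = 0 ∧ v 2 = 0) := not_congr hz0
  simp only [Set.mem_setOf_eq, Set.mem_insert_iff, Set.mem_singleton_iff,
    cone_iff, vec_eq, hz]
  constructor
  · rintro ⟨hne, ⟨h1, h2, h3⟩, h4⟩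
    exact E8_forward (v 0) (v 1) (v 2) hne h1 h2 h3 h4
  · rintro (⟨h0, h1, h2⟩ | ⟨h0, h1, h2⟩ | ⟨h0, h1, h2⟩ | ⟨h0, h1, h2⟩ | ⟨h0, h1, h2⟩ |
      ⟨h0, h1, h2⟩ | ⟨h0, h1, h2⟩ | ⟨h0, h1, h2⟩ | ⟨h0, h1, h2⟩ | ⟨h0, h1, h2⟩) <;>
    rw [h0, h1, h2] <;>
    refine ⟨by norm_num, ⟨by norm_num, by norm_num, by norm_num⟩, by norm_num⟩
end

section
/- Every element of the set {(1,0,0), (0,0,1), (3,4,6), (1,1,2), (2,2,3)} (the nonzero integer points of the profile of the Gröbner cone C = cone((1,0,0),(0,0,1),(3,4,6)) of the E₆-singularity) is irreducible in C: if u, v ∈ ℤ³ both have nonnegative coordinates, both satisfy 3u₂ ≤ 2u₃ and 3u₂ ≤ 4u₁ (respectively 3v₂ ≤ 2v₃ and 3v₂ ≤ 4v₁), and u + v is one of these five vectors, then u = 0 or v = 0. -/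
/-- Every element of `{(1,0,0), (0,0,1), (3,4,6), (1,1,2), (2,2,3)}` (the nonzero
integer points of the profile of the Gröbner cone
`C = {w ∈ (ℝ≥0)³ : 3w₂ ≤ 2w₃ and 3w₂ ≤ 4w₁}` of the `E₆`-singularity) is
irreducible in `C`: it is not the sum of two nonzero integer vectors of `C`. -/
theorem E6_profile_points_irreducible :
    ∀ t ∈ ({![1, 0, 0], ![0, 0, 1], ![3, 4, 6], ![1, 1, 2], ![2, 2, 3]} :
        Set (Fin 3 → ℤ)),
      ∀ u v : Fin 3 → ℤ, (∀ i, 0 ≤ u i) → (∀ i, 0 ≤ v i) →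
        3 * u 1 ≤ 2 * u 2 → 3 * u 1 ≤ 4 * u 0 →
        3 * v 1 ≤ 2 * v 2 → 3 * v 1 ≤ 4 * v 0 →
        u + v = t → u = 0 ∨ v = 0 := by
  intro t ht u v hu hv a1 a2 b1 b2 huv
  have hu0 := hu 0; have hu1 := hu 1; have hu2 := hu 2
  have hv0 := hv 0; have hv1 := hv 1; have hv2 := hv 2
  have e0 := congrFun huv 0
  have e1 := congrFun huv 1
  have e2 := congrFun huv 2
  have key : (u 0 = 0 ∧ u 1 = 0 ∧ u 2 = 0) ∨ (v 0 = 0 ∧ v 1 = 0 ∧ v 2 = 0) := by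
    simp only [Set.mem_insert_iff, Set.mem_singleton_iff] at ht
    rcases ht with h|h|h|h|h <;> subst h <;>
      simp only [Pi.add_apply, Matrix.cons_val_zero, Matrix.cons_val_one,
        Matrix.head_cons, Matrix.cons_val_two, Matrix.tail_cons] at e0 e1 e2 <;>
      omega
  rcases key with ⟨h0, h1, h2⟩ | ⟨h0, h1, h2⟩
  · left; funext i; fin_cases i <;> simpa using ‹_›
  · right; funext i; fin_cases i <;> simpa using ‹_›
end
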